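/- arXiv:1110.1432 — 4 statements merged into one kernel-verified Lean document; each statement's English description precedes it below -/
import Mathlib

section
/- Let R = W·M where W ∈ ℝ^{p×n} and M ∈ ℝ^{n×m} are nonnegative matrices, and suppose W satisfies the sparseness assumption with pure-row indices i_1,…,i_n. Then every row of R is a nonnegative linear combination of the rows R^{i_1},…,R^{i_n}: precisely, for each i ∈ {1,…,p}, R^i = Σ_{k=1}^{n} (W_{i,k}/W_{i_k,k}) · R^{i_k}, and all coefficients W_{i,k}/W_{i_k,k} are nonnegative. -/
/-!
A pure row `idx k` of `W` has the single nonzero entry `W (idx k) k`, so the corresponding row of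
`W * M` is `W (idx k) k • M k`. Expanding any row of `W * M` as `∑ k, W i k • M k` and replacing
each `M k` by `(W (idx k) k)⁻¹ • (W * M) (idx k)` gives the combination; its coefficients are
quotients of nonnegative by positive numbers.
-/

namespace Matrix

variable {l n o α : Type*} [Fintype n]

theorem mul_apply_eq_smul_of_apply_eq_zero [NonUnitalNonAssocSemiring α] {A : Matrix l n α}
    (B : Matrix n o α) {i : l} {k : n} (h : ∀ k', k' ≠ k → A i k' = 0) :
    (A * B) i = A i k • B k := by
  rw [mul_apply_eq_vecMul, vecMul_eq_sum]
  exact Finset.sum_eq_single k (fun k' _ hk' => by rw [h k' hk', zero_smul])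
    (fun hk => absurd (Finset.mem_univ k) hk)

theorem mul_apply_eq_sum_div_smul_of_pure_rows {K : Type*} [Field K] (A : Matrix l n K)
    (B : Matrix n o K) (idx : n → l) (hne : ∀ k, A (idx k) k ≠ 0)
    (hzero : ∀ j k, k ≠ j → A (idx j) k = 0) (i : l) :
    (A * B) i = ∑ k, (A i k / A (idx k) k) • (A * B) (idx k) := by
  rw [mul_apply_eq_vecMul, vecMul_eq_sum]
  refine Finset.sum_congr rfl fun k _ => ?_
  rw [mul_apply_eq_smul_of_apply_eq_zero B (hzero k), smul_smul, div_mul_cancel₀ _ (hne k)]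

end Matrix

theorem row_nonneg_combination_of_pure_rows_general {p n m : ℕ}
    (W : Matrix (Fin p) (Fin n) ℝ) (M : Matrix (Fin n) (Fin m) ℝ)
    (R : Matrix (Fin p) (Fin m) ℝ)
    (hW : ∀ i j, 0 ≤ W i j)
    (hR : R = W * M)
    (idx : Fin n → Fin p)
    (hpos : ∀ j, 0 < W (idx j) j)
    (hzero : ∀ j k, k ≠ j → W (idx j) k = 0) :
    ∀ i : Fin p, (∀ k : Fin n, 0 ≤ W i k / W (idx k) k) ∧
      R i = ∑ k : Fin n, (W i k / W (idx k) k) • R (idx k) := by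
  subst hR
  exact fun i => ⟨fun k => div_nonneg (hW i k) (hpos k).le,
    Matrix.mul_apply_eq_sum_div_smul_of_pure_rows W M idx (fun k => (hpos k).ne') hzero i⟩

/-- Under the sparseness assumption, every row of `R = W * M` is a nonnegative
linear combination of the pure rows `R (idx 1), …, R (idx n)`:
`R i = ∑ k, (W i k / W (idx k) k) • R (idx k)` with all coefficients nonnegative. -/
theorem row_nonneg_combination_of_pure_rows {p n m : ℕ}
    (W : Matrix (Fin p) (Fin n) ℝ) (M : Matrix (Fin n) (Fin m) ℝ)
    (R : Matrix (Fin p) (Fin m) ℝ)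
    (hW : ∀ i j, 0 ≤ W i j) (hM : ∀ i j, 0 ≤ M i j)
    (hR : R = W * M)
    (idx : Fin n → Fin p)
    (hpos : ∀ j, 0 < W (idx j) j)
    (hzero : ∀ j k, k ≠ j → W (idx j) k = 0) :
    ∀ i : Fin p, (∀ k : Fin n, 0 ≤ W i k / W (idx k) k) ∧
      R i = ∑ k : Fin n, (W i k / W (idx k) k) • R (idx k) :=
  row_nonneg_combination_of_pure_rows_general W M R hW hR idx hpos hzero
end

section
/- Let R = W·M where W ∈ ℝ^{p×n} and M ∈ ℝ^{n×m} are nonnegative matrices, suppose W satisfies the sparseness assumption with pure-row indices i_1,…,i_n, and suppose the rows of M are linearly independent. Fix j ∈ {1,…,n}. If R^{i_j} = Σ_{i≠i_j} λ_i R^i for some nonnegative coefficients λ_i ≥ 0, then there exists an index i ≠ i_j with λ_i > 0 such that the row R^i is a positive scalar multiple of the j-th row M^j of M (equivalently, W_{i,j} > 0 and W_{i,k} = 0 for all k ≠ j). -/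
/-!
Expanding the rows of `R = W * M` in the rows of `M` and using their linear independence, the
relation `R (idx j) = ∑ λ i • R i` is a relation `W (idx j) = ∑ λ i • W i` between rows of `W`.
The left side is positive at `j` and zero elsewhere; since all `λ i` and `W i k` are
nonnegative, no cancellation can occur, so some row `W i` with `λ i > 0` has the same sign
pattern, and then `R i = W i j • M j`.
-/

open Finset

namespace Matrix

variable {R m n o : Type*} [Semiring R] [Fintype n]

theorem row_eq_sum_smul_of_mul_row_eq {W : Matrix m n R} {M : Matrix n o R}
    (hM : LinearIndependent R M.row) {a : m} {s : Finset m} {c : m → R}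
    (h : (W * M) a = ∑ i ∈ s, c i • (W * M) i) :
    W a = ∑ i ∈ s, c i • W i := by
  refine vecMul_injective_iff.mpr hM ?_
  simp only [← mul_apply_eq_vecMul, h, sum_vecMul, smul_vecMul]

theorem mul_row_eq_smul_of_row_eq_zero [DecidableEq n] (W : Matrix m n R) (M : Matrix n o R)
    {i : m} {j : n} (h : ∀ k, k ≠ j → W i k = 0) :
    (W * M) i = W i j • M j := by
  have hsingle : W i = Pi.single j (W i j) := by
    ext k
    by_cases hk : k = j
    · subst hk; simp
    · simp [hk, h k hk]
  rw [mul_apply_eq_vecMul, hsingle, single_vecMul, Pi.single_eq_same, row]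

end Matrix

def IsPureAt {κ 𝕜 : Type*} [Zero 𝕜] [LT 𝕜] (x : κ → 𝕜) (j : κ) : Prop :=
  0 < x j ∧ ∀ k, k ≠ j → x k = 0

theorem IsPureAt.exists_of_eq_sum_smul {ι κ 𝕜 : Type*} [Semiring 𝕜] [LinearOrder 𝕜]
    [IsStrictOrderedRing 𝕜] {x : κ → 𝕜} {j : κ} (hx : IsPureAt x j) {s : Finset ι}
    {c : ι → 𝕜} {v : ι → κ → 𝕜} (hc : ∀ i ∈ s, 0 ≤ c i) (hv : ∀ i ∈ s, 0 ≤ v i)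
    (hsum : x = ∑ i ∈ s, c i • v i) :
    ∃ i ∈ s, 0 < c i ∧ IsPureAt (v i) j := by
  have coord (k : κ) : x k = ∑ i ∈ s, c i * v i k := by
    simp only [hsum, Finset.sum_apply, Pi.smul_apply, smul_eq_mul]
  obtain ⟨i, hi, hpos⟩ : ∃ i ∈ s, 0 < c i * v i j :=
    exists_lt_of_sum_lt (by simpa [← coord] using hx.1)
  have hci : 0 < c i := pos_of_mul_pos_left hpos (hv i hi j)
  refine ⟨i, hi, hci, pos_of_mul_pos_right hpos (hc i hi), fun k hk => ?_⟩
  have hterms := (sum_eq_zero_iff_of_nonneg fun i hi => mul_nonneg (hc i hi) (hv i hi k)).mp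
    ((coord k).symm.trans (hx.2 k hk))
  exact le_antisymm (le_of_mul_le_mul_left (hterms i hi ▸ (mul_zero (c i)).ge) hci) (hv i hi k)

theorem pure_row_combination_gives_duplicate_general {p n m : ℕ}
    (W : Matrix (Fin p) (Fin n) ℝ) (M : Matrix (Fin n) (Fin m) ℝ)
    (R : Matrix (Fin p) (Fin m) ℝ)
    (hW : ∀ i j, 0 ≤ W i j)
    (hR : R = W * M)
    (idx : Fin n → Fin p)
    (hpos : ∀ j, 0 < W (idx j) j)
    (hzero : ∀ j k, k ≠ j → W (idx j) k = 0)
    (hindep : LinearIndependent ℝ M)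
    (j : Fin n)
    (lam : Fin p → ℝ) (hlam : ∀ i, 0 ≤ lam i)
    (hcomb : R (idx j) = ∑ i ∈ univ.erase (idx j), lam i • R i) :
    ∃ i : Fin p, i ≠ idx j ∧ 0 < lam i ∧
      (∃ c : ℝ, 0 < c ∧ R i = c • M j) ∧
      0 < W i j ∧ ∀ k, k ≠ j → W i k = 0 := by
  subst hR
  have hWrow := Matrix.row_eq_sum_smul_of_mul_row_eq hindep hcomb
  obtain ⟨i, hi, hlam_i, hWij, hWik⟩ := IsPureAt.exists_of_eq_sum_smul ⟨hpos j, hzero j⟩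
    (fun i _ => hlam i) (fun i _ k => hW i k) hWrow
  exact ⟨i, ne_of_mem_erase hi, hlam_i,
    ⟨W i j, hWij, Matrix.mul_row_eq_smul_of_row_eq_zero W M hWik⟩, hWij, hWik⟩

/-- With `R = W * M`, `W, M ≥ 0`, `W` satisfying the sparseness assumption with
pure-row indices `idx`, and the rows of `M` linearly independent: if the pure row `R (idx j)`
is a nonnegative combination of the other rows, then some row `R i` (with `i ≠ idx j` and a
strictly positive coefficient) is a positive scalar multiple of the `j`-th row of `M`
(equivalently `W i j > 0` and `W i k = 0` for all `k ≠ j`). -/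
theorem pure_row_combination_gives_duplicate {p n m : ℕ}
    (W : Matrix (Fin p) (Fin n) ℝ) (M : Matrix (Fin n) (Fin m) ℝ)
    (R : Matrix (Fin p) (Fin m) ℝ)
    (hW : ∀ i j, 0 ≤ W i j) (hM : ∀ i j, 0 ≤ M i j)
    (hR : R = W * M)
    (idx : Fin n → Fin p)
    (hpos : ∀ j, 0 < W (idx j) j)
    (hzero : ∀ j k, k ≠ j → W (idx j) k = 0)
    (hindep : LinearIndependent ℝ M)
    (j : Fin n)
    (lam : Fin p → ℝ) (hlam : ∀ i, 0 ≤ lam i)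
    (hcomb : R (idx j) = ∑ i ∈ univ.erase (idx j), lam i • R i) :
    ∃ i : Fin p, i ≠ idx j ∧ 0 < lam i ∧
      (∃ c : ℝ, 0 < c ∧ R i = c • M j) ∧
      0 < W i j ∧ ∀ k, k ≠ j → W i k = 0 :=
  pure_row_combination_gives_duplicate_general W M R hW hR idx hpos hzero hindep j lam hlam hcomb
end

section
/- Let R = W·M where W ∈ ℝ^{p×n} and M ∈ ℝ^{n×m} are nonnegative matrices, suppose W satisfies the sparseness assumption with pure-row indices i_1,…,i_n, suppose the rows of M are linearly independent, and suppose that for each j the index i_j is the unique index i ∈ {1,…,p} with W_{i,j} > 0 and W_{i,k} = 0 for all k ≠ j. Then for each j ∈ {1,…,n}, the row R^{i_j} is not a nonnegative linear combination of the other rows {R^i : i ≠ i_j}; consequently its score in the linear programming selection is strictly positive. -/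
/-!
A single linear functional separates `R^{i_j}` from the cone spanned by the other rows. On
coefficient vectors take `φ c = ∑_{k ≠ j} c_k - r c_j`: it is negative on the pure row `W^{i_j}`,
and, for small `r > 0`, nonnegative on every other row `W^i`, because uniqueness of the pure row
forces each such row with `W_{ij} > 0` to have another positive entry. Linear independence of
the rows of `M` transports `φ` to `ψ` with `ψ (R^i) = φ (W^i)`, and then
`‖∑ λ_i R^i - R^{i_j}‖ ≥ -ψ (R^{i_j}) / ‖ψ‖ > 0` for all `λ ≥ 0`.
-/

open Finset Filter Topology

open scoped Matrix

theorem eventually_mul_le_sum_erase {ι : Type*} [Fintype ι] [DecidableEq ι] {x : ι → ℝ}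
    (hx : ∀ k, 0 ≤ x k) {j : ι} (himpure : 0 < x j → ∃ k ≠ j, x k ≠ 0) :
    ∀ᶠ r in 𝓝 0, r * x j ≤ ∑ k ∈ univ.erase j, x k := by
  rcases (hx j).eq_or_lt with hxj | hxj
  · exact .of_forall fun r => by
      simpa [← hxj] using sum_nonneg fun k _ => hx k
  · obtain ⟨k, hkj, hk⟩ := himpure hxj
    have hsum : 0 < ∑ k ∈ univ.erase j, x k :=
      sum_pos' (fun k _ => hx k) ⟨k, mem_erase.2 ⟨hkj, mem_univ k⟩, (hx k).lt_of_ne' hk⟩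
    exact ((continuous_mul_const (x j)).tendsto' 0 0 (zero_mul _)).eventually_le_const hsum

theorem Matrix.exists_linearMap_neg_pureRow_nonneg_otherRows {κ ι : Type*} [Finite κ] [Fintype ι]
    [DecidableEq ι] (W : Matrix κ ι ℝ) (hW : ∀ i k, 0 ≤ W i k) {j : ι} {i₀ : κ}
    (hpos : 0 < W i₀ j) (hzero : ∀ k, k ≠ j → W i₀ k = 0)
    (huniq : ∀ i, (0 < W i j ∧ ∀ k, k ≠ j → W i k = 0) → i = i₀) :
    ∃ φ : (ι → ℝ) →ₗ[ℝ] ℝ, (∀ i, i ≠ i₀ → 0 ≤ φ (W i)) ∧ φ (W i₀) < 0 := by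
  have hrows : ∀ i, ∀ᶠ r in 𝓝 (0 : ℝ), i ≠ i₀ → r * W i j ≤ ∑ k ∈ univ.erase j, W i k := by
    intro i
    by_cases hi : i = i₀
    · exact .of_forall fun _ h => absurd hi h
    · have himpure : 0 < W i j → ∃ k ≠ j, W i k ≠ 0 := fun hij => by
        by_contra! h
        exact hi (huniq i ⟨hij, h⟩)
      exact (eventually_mul_le_sum_erase (hW i) himpure).mono fun _ h _ => h
  obtain ⟨r, hr, hr_le⟩ := (eventually_mem_nhdsWithin.and
    (nhdsWithin_le_nhds (eventually_all.2 hrows)) : ∀ᶠ r in 𝓝[>] (0 : ℝ), _).exists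
  let φ : (ι → ℝ) →ₗ[ℝ] ℝ := ∑ k ∈ univ.erase j, LinearMap.proj k - r • LinearMap.proj j
  have hφ : ∀ x, φ x = ∑ k ∈ univ.erase j, x k - r * x j := fun x => by
    simp only [φ, LinearMap.sub_apply, LinearMap.coe_sum, Finset.sum_apply, LinearMap.proj_apply,
      LinearMap.smul_apply, smul_eq_mul]
  refine ⟨φ, fun i hi => by rw [hφ]; exact sub_nonneg.2 (hr_le i hi), ?_⟩
  have hsum : ∑ k ∈ univ.erase j, W i₀ k = 0 :=
    sum_eq_zero fun k hk => hzero k (ne_of_mem_erase hk)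
  rw [hφ, hsum, zero_sub, neg_lt_zero]
  exact mul_pos hr hpos

theorem Matrix.exists_linearMap_comp_vecMul_eq {K ι μ : Type*} [Field K] [Fintype ι] [Fintype μ]
    {M : Matrix ι μ K} (hM : LinearIndependent K M) (φ : (ι → K) →ₗ[K] K) :
    ∃ ψ : (μ → K) →ₗ[K] K, ∀ c, ψ (c ᵥ* M) = φ c := by
  have hinj : LinearMap.ker M.vecMulLinear = ⊥ :=
    LinearMap.ker_eq_bot.2 (Matrix.vecMul_injective_iff.2 hM)
  obtain ⟨g, hg⟩ := M.vecMulLinear.exists_leftInverse_of_injective hinj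
  exact ⟨φ ∘ₗ g, fun c => by simpa using congrArg φ (LinearMap.congr_fun hg c)⟩

theorem ne_sum_smul_of_apply_neg {𝕜 E ι : Type*} [Semiring 𝕜] [PartialOrder 𝕜] [IsOrderedRing 𝕜]
    [AddCommMonoid E] [Module 𝕜 E] (ψ : E →ₗ[𝕜] 𝕜) {s : Finset ι} {u : ι → E} {v : E}
    (hu : ∀ i ∈ s, 0 ≤ ψ (u i)) (hv : ψ v < 0) {lam : ι → 𝕜} (hlam : ∀ i, 0 ≤ lam i) :
    v ≠ ∑ i ∈ s, lam i • u i := by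
  rintro rfl
  refine hv.not_ge ?_
  simpa using sum_nonneg fun i hi => mul_nonneg (hlam i) (hu i hi)

section ConeSeparation

variable {E ι : Type*} [NormedAddCommGroup E] [NormedSpace ℝ E] (ψ : E →L[ℝ] ℝ)
  {s : Finset ι} {u : ι → E} {v : E}

theorem neg_apply_le_opNorm_mul_norm_sum_smul_sub (hu : ∀ i ∈ s, 0 ≤ ψ (u i)) {lam : ι → ℝ}
    (hlam : ∀ i, 0 ≤ lam i) : -ψ v ≤ ‖ψ‖ * ‖∑ i ∈ s, lam i • u i - v‖ :=
  calc -ψ v ≤ ψ (∑ i ∈ s, lam i • u i - v) := by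
        simpa using sum_nonneg fun i hi => mul_nonneg (hlam i) (hu i hi)
    _ ≤ ‖ψ‖ * ‖∑ i ∈ s, lam i • u i - v‖ := (le_abs_self _).trans (ψ.le_opNorm _)

theorem sInf_norm_sum_smul_sub_pos (hu : ∀ i ∈ s, 0 ≤ ψ (u i)) (hv : ψ v < 0) :
    0 < sInf {t : ℝ | ∃ lam : ι → ℝ, (∀ i, 0 ≤ lam i) ∧ t = ‖∑ i ∈ s, lam i • u i - v‖} := by
  have hψ : 0 < ‖ψ‖ := norm_pos_iff.2 fun h => hv.ne (by simp [h])
  refine (div_pos (neg_pos.2 hv) hψ).trans_le (le_csInf ⟨_, 0, fun _ => le_rfl, rfl⟩ ?_)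
  rintro _ ⟨lam, hlam, rfl⟩
  rw [div_le_iff₀' hψ]
  exact neg_apply_le_opNorm_mul_norm_sum_smul_sub ψ hu hlam

end ConeSeparation

theorem pure_row_score_pos_general {p n m : ℕ}
    (W : Matrix (Fin p) (Fin n) ℝ) (M : Matrix (Fin n) (Fin m) ℝ)
    (R : Matrix (Fin p) (Fin m) ℝ)
    (hW : ∀ i j, 0 ≤ W i j)
    (hR : R = W * M)
    (idx : Fin n → Fin p)
    (hpos : ∀ j, 0 < W (idx j) j)
    (hzero : ∀ j k, k ≠ j → W (idx j) k = 0)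
    (hindep : LinearIndependent ℝ M)
    (huniq : ∀ j i, (0 < W i j ∧ ∀ k, k ≠ j → W i k = 0) → i = idx j) :
    ∀ j : Fin n,
      (¬ ∃ lam : Fin p → ℝ, (∀ i, 0 ≤ lam i) ∧
          R (idx j) = ∑ i ∈ univ.erase (idx j), lam i • R i) ∧
      0 < sInf {t : ℝ | ∃ lam : Fin p → ℝ, (∀ i, 0 ≤ lam i) ∧
          t = ‖(EuclideanSpace.equiv (Fin m) ℝ).symm
                ((∑ i ∈ univ.erase (idx j), lam i • R i) - R (idx j))‖} := by
  intro j
  obtain ⟨φ, hφ_nonneg, hφ_neg⟩ :=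
    W.exists_linearMap_neg_pureRow_nonneg_otherRows hW (hpos j) (hzero j) (huniq j)
  obtain ⟨ψ, hψ⟩ := Matrix.exists_linearMap_comp_vecMul_eq hindep φ
  have hψR : ∀ i, ψ (R i) = φ (W i) := fun i => by rw [hR, Matrix.mul_apply_eq_vecMul, hψ]
  have hu : ∀ i ∈ univ.erase (idx j), 0 ≤ ψ (R i) := fun i hi =>
    (hψR i).symm ▸ hφ_nonneg i (ne_of_mem_erase hi)
  have hv : ψ (R (idx j)) < 0 := (hψR _).symm ▸ hφ_neg
  refine ⟨fun ⟨lam, hlam, h⟩ => ne_sum_smul_of_apply_neg ψ hu hv hlam h, ?_⟩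
  set e := EuclideanSpace.equiv (Fin m) ℝ
  let ψE := (LinearMap.toContinuousLinearMap ψ).comp (e : EuclideanSpace ℝ (Fin m) →L[ℝ] _)
  have hψE : ∀ x, ψE (e.symm x) = ψ x := fun x => by simp [ψE]
  simpa only [map_sub, map_sum, map_smul] using
    sInf_norm_sum_smul_sub_pos ψE (u := fun i => e.symm (R i)) (v := e.symm (R (idx j)))
      (fun i hi => (hψE _).symm ▸ hu i hi) ((hψE _).symm ▸ hv)

/-- With `R = W * M`, `W, M ≥ 0`, `W` satisfying the sparseness assumption, the
rows of `M` linearly independent, and each pure-row index `idx j` being the *unique* index `i`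
with `W i j > 0` and `W i k = 0` for `k ≠ j`: for every `j`, the row `R (idx j)` is not a
nonnegative linear combination of the other rows of `R`, and consequently its score (the
infimum over nonnegative `λ` of `‖∑_{i ≠ idx j} λ i • R i − R (idx j)‖₂`) is strictly
positive. -/
theorem pure_row_score_pos {p n m : ℕ}
    (W : Matrix (Fin p) (Fin n) ℝ) (M : Matrix (Fin n) (Fin m) ℝ)
    (R : Matrix (Fin p) (Fin m) ℝ)
    (hW : ∀ i j, 0 ≤ W i j) (hM : ∀ i j, 0 ≤ M i j)
    (hR : R = W * M)
    (idx : Fin n → Fin p)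
    (hpos : ∀ j, 0 < W (idx j) j)
    (hzero : ∀ j k, k ≠ j → W (idx j) k = 0)
    (hindep : LinearIndependent ℝ M)
    (huniq : ∀ j i, (0 < W i j ∧ ∀ k, k ≠ j → W i k = 0) → i = idx j) :
    ∀ j : Fin n,
      (¬ ∃ lam : Fin p → ℝ, (∀ i, 0 ≤ lam i) ∧
          R (idx j) = ∑ i ∈ univ.erase (idx j), lam i • R i) ∧
      0 < sInf {t : ℝ | ∃ lam : Fin p → ℝ, (∀ i, 0 ≤ lam i) ∧
          t = ‖(EuclideanSpace.equiv (Fin m) ℝ).symm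
                ((∑ i ∈ univ.erase (idx j), lam i • R i) - R (idx j))‖} :=
  pure_row_score_pos_general W M R hW hR idx hpos hzero hindep huniq
end

section
/- Let R = W·M where W ∈ ℝ^{p×n} and M ∈ ℝ^{n×m} are nonnegative matrices, and suppose W satisfies the sparseness assumption with pure-row indices i_1,…,i_n. If a row R^l of R is not a nonnegative linear combination of the other rows {R^i : i ≠ l}, then l ∈ {i_1,…,i_n}; in particular, R^l is a positive scalar multiple of some row of M. -/
open Finset

/-!
Row `idx j` of `W` has its only nonzero entry in column `j`, so `R (idx j) = W (idx j) j • M j`.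
Hence every row `R l = ∑ j, W l j • M j = ∑ j, (W l j / W (idx j) j) • R (idx j)` is a
nonnegative combination of the (pairwise distinct) pure rows; if `l` were not a pure-row index,
this would express `R l` through the other rows.
-/

namespace Matrix

variable {ι κ α R : Type*}

theorem injective_of_pure_rows [Zero R] {W : Matrix ι κ R} {idx : κ → ι}
    (hpos : ∀ j, W (idx j) j ≠ 0) (hzero : ∀ j k, k ≠ j → W (idx j) k = 0) :
    Function.Injective idx := by
  intro a b hab
  by_contra hne
  exact hpos a (hab ▸ hzero b a hne)

theorem mul_apply_pure_row [Fintype κ] [NonUnitalNonAssocSemiring R] {W : Matrix ι κ R}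
    (M : Matrix κ α R) {i : ι} {j : κ} (hzero : ∀ k, k ≠ j → W i k = 0) :
    (W * M) i = W i j • M j := by
  rw [mul_apply_eq_vecMul, vecMul_eq_sum,
    sum_eq_single j (fun k _ hk ↦ by rw [hzero k hk, zero_smul]) (fun hj ↦ absurd (mem_univ j) hj)]

theorem mul_apply_eq_sum_pure_rows [Fintype κ] [Field R] {W : Matrix ι κ R}
    (M : Matrix κ α R) {idx : κ → ι} (hpos : ∀ j, W (idx j) j ≠ 0)
    (hzero : ∀ j k, k ≠ j → W (idx j) k = 0) (i : ι) :
    (W * M) i = ∑ j, (W i j / W (idx j) j) • (W * M) (idx j) := by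
  simp only [mul_apply_pure_row M (hzero _), smul_smul, div_mul_cancel₀ _ (hpos _)]
  rw [mul_apply_eq_vecMul, vecMul_eq_sum]

end Matrix

theorem exists_nonneg_sum_erase_eq_sum_comp {ι κ 𝕜 V : Type*} [Fintype ι] [DecidableEq ι]
    [Fintype κ] [Semiring 𝕜] [PartialOrder 𝕜] [AddCommMonoid V] [Module 𝕜 V]
    {e : κ → ι} (he : Function.Injective e) {l : ι} (hl : ∀ j, e j ≠ l)
    {c : κ → 𝕜} (hc : ∀ j, 0 ≤ c j) (v : ι → V) :
    ∃ lam : ι → 𝕜, (∀ i, 0 ≤ lam i) ∧ ∑ j, c j • v (e j) = ∑ i ∈ univ.erase l, lam i • v i := by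
  refine ⟨Function.extend e c 0, fun i ↦ ?_, ?_⟩
  · by_cases hi : ∃ j, e j = i
    · obtain ⟨j, rfl⟩ := hi
      exact he.extend_apply c (0 : ι → 𝕜) j ▸ hc j
    · exact (Function.extend_apply' c (0 : ι → 𝕜) i hi).ge
  · refine sum_of_injOn e he.injOn (fun j _ ↦ by simp [hl j]) (fun i _ hi ↦ ?_)
      (fun j _ ↦ by rw [he.extend_apply])
    rw [Function.extend_apply' c (0 : ι → 𝕜) i (by simpa using hi), Pi.zero_apply,
      zero_smul]

theorem extreme_row_is_pure_general {p n m : ℕ}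
    (W : Matrix (Fin p) (Fin n) ℝ) (M : Matrix (Fin n) (Fin m) ℝ)
    (R : Matrix (Fin p) (Fin m) ℝ)
    (hW : ∀ i j, 0 ≤ W i j)
    (hR : R = W * M)
    (idx : Fin n → Fin p)
    (hpos : ∀ j, 0 < W (idx j) j)
    (hzero : ∀ j k, k ≠ j → W (idx j) k = 0)
    (l : Fin p)
    (h : ¬ ∃ lam : Fin p → ℝ, (∀ i, 0 ≤ lam i) ∧
        R l = ∑ i ∈ univ.erase l, lam i • R i) :
    (∃ j : Fin n, l = idx j) ∧ ∃ j : Fin n, ∃ c : ℝ, 0 < c ∧ R l = c • M j := by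
  subst hR
  have hpos' : ∀ j, W (idx j) j ≠ 0 := fun j ↦ (hpos j).ne'
  obtain ⟨j, rfl⟩ : ∃ j, l = idx j := by
    by_contra! hl
    refine h ?_
    rw [Matrix.mul_apply_eq_sum_pure_rows M hpos' hzero l]
    exact exists_nonneg_sum_erase_eq_sum_comp (Matrix.injective_of_pure_rows hpos' hzero)
      (fun j hj ↦ hl j hj.symm) (fun j ↦ div_nonneg (hW l j) (hW _ j)) _
  exact ⟨⟨j, rfl⟩, j, W (idx j) j, hpos j, Matrix.mul_apply_pure_row M (hzero j)⟩

/-- With `R = W * M`, `W, M ≥ 0` and `W` satisfying the sparseness assumption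
with pure-row indices `idx`: if a row `R l` is not a nonnegative linear combination of the
other rows of `R`, then `l` is one of the pure-row indices `idx j`; in particular `R l` is a
positive scalar multiple of some row of `M`. -/
theorem extreme_row_is_pure {p n m : ℕ}
    (W : Matrix (Fin p) (Fin n) ℝ) (M : Matrix (Fin n) (Fin m) ℝ)
    (R : Matrix (Fin p) (Fin m) ℝ)
    (hW : ∀ i j, 0 ≤ W i j) (hM : ∀ i j, 0 ≤ M i j)
    (hR : R = W * M)
    (idx : Fin n → Fin p)
    (hpos : ∀ j, 0 < W (idx j) j)
    (hzero : ∀ j k, k ≠ j → W (idx j) k = 0)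
    (l : Fin p)
    (h : ¬ ∃ lam : Fin p → ℝ, (∀ i, 0 ≤ lam i) ∧
        R l = ∑ i ∈ univ.erase l, lam i • R i) :
    (∃ j : Fin n, l = idx j) ∧ ∃ j : Fin n, ∃ c : ℝ, 0 < c ∧ R l = c • M j :=
  extreme_row_is_pure_general W M R hW hR idx hpos hzero l h
end
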